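/- Let T be a triangular bounded cell of a simple arrangement L of lines in ℝ², formed by lines p, q, r, and suppose every line of L contains an edge of a fixed convex cell P of L with at least 5 edges. Then T and P share a common edge: some maximal boundary segment of T equals a maximal boundary segment of P. -/

import Mathlib

/-!
Cells are sign cells: the cell of a point `x` off the lines consists of the points strictly on the
side of `x` of every line, and its closure of the points weakly on that side. Each side of the
triangle `T` lies on a line of `L`, since a segment covered by finitely many lines lies on one of
them. Let `m`, `g`, `h` carry the sides `AB`, `BC`, `CA` of `T`. On `m`, the points on `P`'s side of
`g` lie beyond `B` when `g` separates `P` from `T`, and those on `P`'s side of `h` lie before `A`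
when `h` does; so if both separated, `closure P` would miss `m`, although `m` carries an edge of
`P`. Hence two of the three side lines, say `g` and `h`, do not separate `P` from `T`. Then the edge
of `P` on `m` lies in `[A, B]`, a line other than `m` separating `P` from `T` would vanish at both
ends of that edge and be parallel to `m`, so `[A, B]` lies on the boundary of `P` and is a common
edge.
-/

open Set

/-- A line in the real plane `ℝ × ℝ`, given by the equation `a*x + b*y = c`
with `(a, b) ≠ (0, 0)`. -/
structure Line2 where
  a : ℝ
  b : ℝ
  c : ℝ
  nondeg : (a, b) ≠ (0, 0)

/-- The set of points of a line. -/
def Line2.carrier (ℓ : Line2) : Set (ℝ × ℝ) :=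
  {p | ℓ.a * p.1 + ℓ.b * p.2 = ℓ.c}

/-- Two lines are parallel if their normal vectors are proportional
(this includes the case of equal lines). -/
def Line2.Parallel (ℓ₁ ℓ₂ : Line2) : Prop :=
  ℓ₁.a * ℓ₂.b = ℓ₂.a * ℓ₁.b

/-- A simple arrangement: a finite set of lines, pairwise non-parallel,
no point on three (or more) of the lines. -/
def IsSimpleArrangement (L : Finset Line2) : Prop :=
  (∀ ℓ₁ ∈ L, ∀ ℓ₂ ∈ L, ℓ₁ ≠ ℓ₂ → ¬ Line2.Parallel ℓ₁ ℓ₂) ∧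
  (∀ ℓ₁ ∈ L, ∀ ℓ₂ ∈ L, ∀ ℓ₃ ∈ L, ℓ₁ ≠ ℓ₂ → ℓ₁ ≠ ℓ₃ → ℓ₂ ≠ ℓ₃ →
    ∀ p : ℝ × ℝ, ¬(p ∈ ℓ₁.carrier ∧ p ∈ ℓ₂.carrier ∧ p ∈ ℓ₃.carrier))

/-- The union of the lines of an arrangement. -/
def linesUnion (L : Finset Line2) : Set (ℝ × ℝ) := ⋃ ℓ ∈ L, ℓ.carrier

/-- A cell of the arrangement determined by a closed set `S` of "forbidden" points:
a connected component of the complement of `S`. -/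
def IsCellOf (S : Set (ℝ × ℝ)) (C : Set (ℝ × ℝ)) : Prop :=
  ∃ x, x ∉ S ∧ C = connectedComponentIn Sᶜ x

/-- A cell of a line arrangement: a connected component of the complement of the
union of the lines. -/
def IsCell (L : Finset Line2) (C : Set (ℝ × ℝ)) : Prop :=
  IsCellOf (linesUnion L) C

/-- A set is a (closed, nondegenerate) triangle. -/
def IsTriangleSet (T : Set (ℝ × ℝ)) : Prop :=
  ∃ u v w : ℝ × ℝ, ¬ Collinear ℝ ({u, v, w} : Set (ℝ × ℝ)) ∧
    T = convexHull ℝ ({u, v, w} : Set (ℝ × ℝ))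

/-- An edge of (the closure of) a polygonal region `P`: a maximal nondegenerate
segment contained in the frontier of `P`. -/
def IsEdge (P : Set (ℝ × ℝ)) (e : Set (ℝ × ℝ)) : Prop :=
  ∃ x y : ℝ × ℝ, x ≠ y ∧ e = segment ℝ x y ∧ e ⊆ frontier P ∧
    ∀ x' y' : ℝ × ℝ, e ⊆ segment ℝ x' y' → segment ℝ x' y' ⊆ frontier P →
      segment ℝ x' y' = e

lemma IsPreconnected.mul_pos_of_ne_zero {X : Type*} [TopologicalSpace X] {S : Set X}
    (hS : IsPreconnected S) {f : X → ℝ} (hf : ContinuousOn f S) (h0 : ∀ z ∈ S, f z ≠ 0)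
    {a b : X} (ha : a ∈ S) (hb : b ∈ S) : 0 < f a * f b := by
  by_contra! hab
  have hfa := h0 a ha
  have hfb := h0 b hb
  obtain ⟨z, hz, hz0⟩ : (0 : ℝ) ∈ f '' S := by
    rcases hfa.lt_or_gt with hfa | hfa
    · exact hS.intermediate_value ha hb hf ⟨hfa.le, by nlinarith⟩
    · exact hS.intermediate_value hb ha hf ⟨by nlinarith, hfa.le⟩
  exact h0 z hz hz0

lemma mul_nonneg_of_mul_nonneg_of_mul_pos {a b c : ℝ} (hab : 0 ≤ a * b) (hbc : 0 < b * c) :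
    0 ≤ a * c := by
  have hb : b ≠ 0 := by rintro rfl; simp at hbc
  nlinarith [mul_nonneg hab hbc.le, mul_self_pos.mpr hb]

lemma mul_nonpos_of_mul_nonneg_of_mul_neg {a b c : ℝ} (hab : 0 ≤ a * b) (hbc : b * c < 0) :
    a * c ≤ 0 := by
  have := mul_nonneg_of_mul_nonneg_of_mul_pos hab (by linarith : 0 < b * -c)
  linarith

lemma eq_zero_of_mul_nonneg_of_mul_nonneg {a b c : ℝ} (hca : 0 ≤ c * a) (hcb : 0 ≤ c * b)
    (hab : a * b < 0) : c = 0 := by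
  by_contra hc
  nlinarith [mul_nonneg hca hcb, mul_self_pos.mpr hc]

lemma Set.insert_insert_singleton_rotate {α : Type*} (a b c : α) :
    ({b, c, a} : Set α) = {a, b, c} := by
  ext; simp only [mem_insert_iff, mem_singleton_iff]; tauto

namespace Line2

variable {ℓ m g h : Line2} {A B z y₁ y₂ : ℝ × ℝ}

noncomputable def eval (ℓ : Line2) (z : ℝ × ℝ) : ℝ := ℓ.a * z.1 + ℓ.b * z.2 - ℓ.c

lemma mem_carrier_iff_eval_eq_zero : z ∈ ℓ.carrier ↔ ℓ.eval z = 0 := by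
  simp [carrier, eval, sub_eq_zero]

lemma continuous_eval (ℓ : Line2) : Continuous ℓ.eval := by
  unfold eval; fun_prop

lemma eval_add_smul_add {a b : ℝ} (hab : a + b = 1) (z w : ℝ × ℝ) :
    ℓ.eval (a • z + b • w) = a * ℓ.eval z + b * ℓ.eval w := by
  simp only [eval, Prod.fst_add, Prod.snd_add, Prod.smul_fst, Prod.smul_snd, smul_eq_mul]
  linear_combination ℓ.c * hab

lemma eval_lineMap (ℓ : Line2) (A B : ℝ × ℝ) (t : ℝ) :
    ℓ.eval (AffineMap.lineMap A B t) = ℓ.eval A + t * (ℓ.eval B - ℓ.eval A) := by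
  simp only [AffineMap.lineMap_apply, eval, vsub_eq_sub, vadd_eq_add, Prod.fst_add, Prod.snd_add,
    Prod.smul_fst, Prod.smul_snd, Prod.fst_sub, Prod.snd_sub, smul_eq_mul]
  ring

lemma eval_lineMap_of_eval_right (hB : ℓ.eval B = 0) (t : ℝ) :
    ℓ.eval (AffineMap.lineMap A B t) = (1 - t) * ℓ.eval A := by
  rw [eval_lineMap, hB]; ring

lemma eval_lineMap_of_eval_left (hA : ℓ.eval A = 0) (t : ℝ) :
    ℓ.eval (AffineMap.lineMap A B t) = t * ℓ.eval B := by
  rw [eval_lineMap, hA]; ring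

lemma sq_add_sq_pos (ℓ : Line2) : 0 < ℓ.a ^ 2 + ℓ.b ^ 2 := by
  have h := ℓ.nondeg
  by_contra! h'
  exact h (Prod.ext (by nlinarith [sq_nonneg ℓ.a, sq_nonneg ℓ.b])
    (by nlinarith [sq_nonneg ℓ.a, sq_nonneg ℓ.b]))

lemma eval_eq_zero_of_eval_lineMap {s t : ℝ} (hst : s ≠ t)
    (hs : ℓ.eval (AffineMap.lineMap A B s) = 0) (ht : ℓ.eval (AffineMap.lineMap A B t) = 0) :
    ℓ.eval A = 0 ∧ ℓ.eval B = 0 := by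
  rw [eval_lineMap] at hs ht
  have hBA : ℓ.eval B - ℓ.eval A = 0 :=
    (mul_eq_zero.mp (by linear_combination hs - ht : (s - t) * _ = 0)).resolve_left
      (sub_ne_zero.mpr hst)
  rw [hBA, mul_zero, add_zero] at hs
  exact ⟨hs, by linarith⟩

lemma collinear_carrier (ℓ : Line2) : Collinear ℝ ℓ.carrier := by
  let φ : Module.Dual ℝ (ℝ × ℝ) := ℓ.a • LinearMap.fst ℝ ℝ ℝ + ℓ.b • LinearMap.snd ℝ ℝ ℝ
  have hφ : φ ≠ 0 := fun h => ℓ.nondeg (Prod.ext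
    (by simpa [φ] using LinearMap.congr_fun h (1, 0))
    (by simpa [φ] using LinearMap.congr_fun h (0, 1)))
  have hspan : vectorSpan ℝ ℓ.carrier ≤ LinearMap.ker φ := by
    refine Submodule.span_le.mpr ?_
    rintro _ ⟨p, hp, q, hq, rfl⟩
    change ℓ.a * p.1 + ℓ.b * p.2 = ℓ.c at hp
    change ℓ.a * q.1 + ℓ.b * q.2 = ℓ.c at hq
    simp only [SetLike.mem_coe, LinearMap.mem_ker, vsub_eq_sub, φ, LinearMap.add_apply,
      LinearMap.smul_apply, LinearMap.fst_apply, LinearMap.snd_apply, Prod.fst_sub, Prod.snd_sub,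
      smul_eq_mul]
    linear_combination hp - hq
  have hker := φ.finrank_ker_add_one_of_ne_zero hφ
  rw [Module.finrank_prod, Module.finrank_self] at hker
  rw [collinear_iff_finrank_le_one]
  have := Submodule.finrank_mono hspan
  omega

lemma exists_lineMap_eq (hAB : A ≠ B) (hA : m.eval A = 0) (hB : m.eval B = 0)
    (hz : m.eval z = 0) : ∃ t : ℝ, AffineMap.lineMap A B t = z := by
  simp only [← mem_carrier_iff_eval_eq_zero] at hA hB hz
  exact (mem_affineSpan_pair_iff_exists_lineMap_eq).mp
    (m.collinear_carrier.mem_affineSpan_of_mem_of_ne hA hB hz hAB)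

lemma collinear_of_eval_eq_zero {C : ℝ × ℝ} (hA : ℓ.eval A = 0) (hB : ℓ.eval B = 0)
    (hC : ℓ.eval C = 0) : Collinear ℝ ({A, B, C} : Set (ℝ × ℝ)) := by
  refine ℓ.collinear_carrier.subset ?_
  simp only [insert_subset_iff, singleton_subset_iff, mem_carrier_iff_eval_eq_zero]
  exact ⟨hA, hB, hC⟩

lemma parallel_of_eval_eq_zero (hAB : A ≠ B) (hℓA : ℓ.eval A = 0) (hℓB : ℓ.eval B = 0)
    (hmA : m.eval A = 0) (hmB : m.eval B = 0) : ℓ.Parallel m := by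
  simp only [eval] at hℓA hℓB hmA hmB
  have hd : B.1 - A.1 ≠ 0 ∨ B.2 - A.2 ≠ 0 := by
    by_contra! h
    exact hAB (Prod.ext (by linarith [h.1]) (by linarith [h.2]))
  unfold Parallel
  rw [← sub_eq_zero]
  rcases hd with h | h
  · refine (mul_eq_zero.mp ?_).resolve_right h
    linear_combination m.b * (hℓB - hℓA) - ℓ.b * (hmB - hmA)
  · refine (mul_eq_zero.mp ?_).resolve_right h
    linear_combination ℓ.a * (hmB - hmA) - m.a * (hℓB - hℓA)

noncomputable def through (A B : ℝ × ℝ) (hAB : A ≠ B) : Line2 where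
  a := B.2 - A.2
  b := A.1 - B.1
  c := (B.2 - A.2) * A.1 + (A.1 - B.1) * A.2
  nondeg h := hAB (Prod.ext (by simp at h; linarith) (by simp at h; linarith))

lemma eval_through_left (hAB : A ≠ B) : (through A B hAB).eval A = 0 := by
  simp [through, eval]

lemma eval_through_right (hAB : A ≠ B) : (through A B hAB).eval B = 0 := by
  simp [through, eval]; ring

lemma notMem_interior_of_eval_eq_zero {S : Set (ℝ × ℝ)} {s : ℝ} (hs : s ≠ 0)
    (hS : ∀ w ∈ S, 0 ≤ ℓ.eval w * s) (hz : ℓ.eval z = 0) : z ∉ interior S := by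
  intro hzS
  -- move from `z` along the normal `(a, b)`, to the side of the line opposite to `s`
  let d : ℝ × ℝ := (-s) • (ℓ.a, ℓ.b)
  have hpath : Filter.Tendsto (fun t : ℝ => z + t • d) (nhds 0) (nhds z) :=
    (by fun_prop : Continuous fun t : ℝ => z + t • d).tendsto' 0 z (by simp)
  have hev : ∀ᶠ t in nhdsWithin (0 : ℝ) (Ioi 0), z + t • d ∈ S :=
    nhdsWithin_le_nhds (hpath.eventually (mem_interior_iff_mem_nhds.mp hzS))
  obtain ⟨t, hzt, ht⟩ := (hev.and self_mem_nhdsWithin).exists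
  have heval : ℓ.eval (z + t • d) = -(t * s) * (ℓ.a ^ 2 + ℓ.b ^ 2) := by
    simp only [eval, d, Prod.fst_add, Prod.snd_add, Prod.smul_fst, Prod.smul_snd,
      smul_eq_mul] at hz ⊢
    linear_combination hz
  have hneg : ℓ.eval (z + t • d) * s < 0 := by
    rw [heval]
    have := mul_pos (mul_pos (mem_Ioi.mp ht) (mul_self_pos.mpr hs)) ℓ.sq_add_sq_pos
    linarith
  exact hneg.not_ge (hS _ hzt)

lemma eval_eq_zero_of_mem_segment (hA : ℓ.eval A = 0) (hB : ℓ.eval B = 0)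
    (hz : z ∈ segment ℝ A B) : ℓ.eval z = 0 := by
  rw [segment_eq_image_lineMap] at hz
  obtain ⟨t, -, rfl⟩ := hz
  rw [eval_lineMap, hA, hB]; ring

lemma eval_eq_zero_of_mem_segment_of_mem_segment {x y : ℝ × ℝ} (hAB : A ≠ B)
    (hA : A ∈ segment ℝ x y) (hB : B ∈ segment ℝ x y) (hA0 : ℓ.eval A = 0)
    (hB0 : ℓ.eval B = 0) : ℓ.eval x = 0 ∧ ℓ.eval y = 0 := by
  rw [segment_eq_image_lineMap] at hA hB
  obtain ⟨s, -, rfl⟩ := hA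
  obtain ⟨t, -, rfl⟩ := hB
  exact eval_eq_zero_of_eval_lineMap (fun hst => hAB (by rw [hst])) hA0 hB0

lemma mem_segment_of_eval (hAB : A ≠ B) (hmA : m.eval A = 0) (hmB : m.eval B = 0)
    (hgB : g.eval B = 0) (hhA : h.eval A = 0)
    (hgA : 0 < g.eval A * g.eval y₁) (hhB : 0 < h.eval B * h.eval y₂) (hz : m.eval z = 0)
    (hzg : 0 ≤ g.eval z * g.eval y₁) (hzh : 0 ≤ h.eval z * h.eval y₂) : z ∈ segment ℝ A B := by
  obtain ⟨t, rfl⟩ := exists_lineMap_eq hAB hmA hmB hz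
  rw [eval_lineMap_of_eval_right hgB] at hzg
  rw [eval_lineMap_of_eval_left hhA] at hzh
  rw [segment_eq_image_lineMap]
  exact ⟨t, ⟨by nlinarith, by nlinarith⟩, rfl⟩

lemma eval_ne_zero_of_eval_mul_nonpos (hAB : A ≠ B) (hmA : m.eval A = 0) (hmB : m.eval B = 0)
    (hgB : g.eval B = 0) (hhA : h.eval A = 0)
    (hgA : 0 < g.eval A * g.eval y₁) (hhB : 0 < h.eval B * h.eval y₂)
    (hzg : g.eval z * g.eval y₁ ≤ 0) (hzh : h.eval z * h.eval y₂ ≤ 0) : m.eval z ≠ 0 := by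
  intro hz
  obtain ⟨t, rfl⟩ := exists_lineMap_eq hAB hmA hmB hz
  rw [eval_lineMap_of_eval_right hgB] at hzg
  rw [eval_lineMap_of_eval_left hhA] at hzh
  nlinarith

lemma convex_setOf_eval_mul_mem (ℓ : Line2) (s : ℝ) {I : Set ℝ} (hI : Convex ℝ I) :
    Convex ℝ {z | ℓ.eval z * s ∈ I} := by
  intro z hz w hw a b ha hb hab
  have := hI hz hw ha hb hab
  simp only [mem_ofPred_eq, ℓ.eval_add_smul_add hab, smul_eq_mul] at this ⊢
  convert this using 1
  ring

lemma eval_mul_nonneg_of_mem_convexHull {S : Set (ℝ × ℝ)} {s : ℝ}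
    (hS : ∀ w ∈ S, 0 ≤ ℓ.eval w * s) (hz : z ∈ convexHull ℝ S) : 0 ≤ ℓ.eval z * s :=
  convexHull_min hS (ℓ.convex_setOf_eval_mul_mem s (convex_Ici 0)) hz

def Separates (ℓ : Line2) (x y : ℝ × ℝ) : Prop := ℓ.eval x * ℓ.eval y < 0

lemma mul_pos_of_not_separates {x y : ℝ × ℝ} (hx : ℓ.eval x ≠ 0)
    (hy : ℓ.eval y ≠ 0) (h : ¬ℓ.Separates x y) : 0 < ℓ.eval x * ℓ.eval y :=
  (not_lt.mp h).lt_of_ne (mul_ne_zero hx hy).symm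

end Line2

def openCell (L : Finset Line2) (x : ℝ × ℝ) : Set (ℝ × ℝ) :=
  {z | ∀ ℓ ∈ L, 0 < ℓ.eval z * ℓ.eval x}

def closedCell (L : Finset Line2) (x : ℝ × ℝ) : Set (ℝ × ℝ) :=
  {z | ∀ ℓ ∈ L, 0 ≤ ℓ.eval z * ℓ.eval x}

section Cells

variable {L : Finset Line2} {x z : ℝ × ℝ}

lemma mem_linesUnion_iff : z ∈ linesUnion L ↔ ∃ ℓ ∈ L, ℓ.eval z = 0 := by
  simp [linesUnion, Line2.mem_carrier_iff_eval_eq_zero]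

lemma isOpen_openCell (L : Finset Line2) (x : ℝ × ℝ) : IsOpen (openCell L x) := by
  simp only [openCell, ofPred_forall]
  exact isOpen_biInter_finset fun ℓ _ =>
    isOpen_lt continuous_const (ℓ.continuous_eval.mul continuous_const)

lemma isClosed_closedCell (L : Finset Line2) (x : ℝ × ℝ) : IsClosed (closedCell L x) := by
  simp only [closedCell, ofPred_forall]
  exact isClosed_biInter fun ℓ _ =>
    isClosed_le continuous_const (ℓ.continuous_eval.mul continuous_const)

lemma convex_openCell (L : Finset Line2) (x : ℝ × ℝ) : Convex ℝ (openCell L x) := by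
  simp only [openCell, ofPred_forall]
  exact convex_iInter₂ fun ℓ _ => ℓ.convex_setOf_eval_mul_mem _ (convex_Ioi 0)

lemma openCell_subset_closedCell : openCell L x ⊆ closedCell L x :=
  fun _ hz ℓ hℓ => (hz ℓ hℓ).le

lemma mem_openCell_self (hx : ∀ ℓ ∈ L, ℓ.eval x ≠ 0) : x ∈ openCell L x :=
  fun ℓ hℓ => mul_self_pos.mpr (hx ℓ hℓ)

lemma openCell_subset_compl_linesUnion : openCell L x ⊆ (linesUnion L)ᶜ := by
  rintro z hz hzL
  obtain ⟨ℓ, hℓ, hz0⟩ := mem_linesUnion_iff.mp hzL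
  simpa [hz0] using hz ℓ hℓ

lemma IsCell.exists_eq_openCell {C : Set (ℝ × ℝ)} (hC : IsCell L C) :
    ∃ x, (∀ ℓ ∈ L, ℓ.eval x ≠ 0) ∧ C = openCell L x := by
  obtain ⟨x, hxL, rfl⟩ := hC
  have hx : ∀ ℓ ∈ L, ℓ.eval x ≠ 0 := fun ℓ hℓ h0 => hxL (mem_linesUnion_iff.mpr ⟨ℓ, hℓ, h0⟩)
  refine ⟨x, hx, subset_antisymm (fun z hz ℓ hℓ => ?_) ?_⟩
  · exact isPreconnected_connectedComponentIn.mul_pos_of_ne_zero ℓ.continuous_eval.continuousOn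
      (fun w hw h0 => (connectedComponentIn_subset _ x hw : w ∉ linesUnion L)
        (mem_linesUnion_iff.mpr ⟨ℓ, hℓ, h0⟩))
      hz (mem_connectedComponentIn hxL)
  · exact (convex_openCell L x).isPreconnected.subset_connectedComponentIn (mem_openCell_self hx)
      openCell_subset_compl_linesUnion

lemma closure_openCell (hx : ∀ ℓ ∈ L, ℓ.eval x ≠ 0) : closure (openCell L x) = closedCell L x := by
  refine subset_antisymm (closure_minimal openCell_subset_closedCell (isClosed_closedCell L x))
    fun z hz => ?_
  have hseg : openSegment ℝ x z ⊆ openCell L x := by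
    rintro _ ⟨a, b, ha, hb, hab, rfl⟩ ℓ hℓ
    rw [ℓ.eval_add_smul_add hab]
    have := mul_pos ha (mul_self_pos.mpr (hx ℓ hℓ))
    have := mul_nonneg hb.le (hz ℓ hℓ)
    nlinarith
  exact closure_mono hseg (segment_subset_closure_openSegment (right_mem_segment ℝ x z))

lemma frontier_closure_openCell (hx : ∀ ℓ ∈ L, ℓ.eval x ≠ 0) :
    frontier (closure (openCell L x)) = closedCell L x \ openCell L x := by
  have hne : (interior (openCell L x)).Nonempty :=
    ⟨x, by rw [(isOpen_openCell L x).interior_eq]; exact mem_openCell_self hx⟩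
  rw [frontier, closure_closure,
    (convex_openCell L x).interior_closure_eq_interior_of_nonempty_interior hne,
    (isOpen_openCell L x).interior_eq, closure_openCell hx]

lemma exists_eval_eq_zero_of_mem_diff (hx : ∀ ℓ ∈ L, ℓ.eval x ≠ 0)
    (hz : z ∈ closedCell L x \ openCell L x) : ∃ ℓ ∈ L, ℓ.eval z = 0 := by
  by_contra! h
  exact hz.2 fun ℓ hℓ => (hz.1 ℓ hℓ).lt_of_ne (mul_ne_zero (h ℓ hℓ) (hx ℓ hℓ)).symm

end Cells

section Triangle

variable {A B C z : ℝ × ℝ}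

lemma not_collinear_rotate (hnc : ¬Collinear ℝ ({A, B, C} : Set (ℝ × ℝ))) :
    ¬Collinear ℝ ({B, C, A} : Set (ℝ × ℝ)) := by
  rwa [Set.insert_insert_singleton_rotate]

lemma ne_of_not_collinear (hnc : ¬Collinear ℝ ({A, B, C} : Set (ℝ × ℝ))) : A ≠ B := by
  rintro rfl
  exact hnc (by simpa using collinear_pair ℝ A C)

lemma eval_ne_zero_of_not_collinear {ℓ : Line2} (hnc : ¬Collinear ℝ ({A, B, C} : Set (ℝ × ℝ)))
    (hB : ℓ.eval B = 0) (hC : ℓ.eval C = 0) : ℓ.eval A ≠ 0 :=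
  fun hA => hnc (Line2.collinear_of_eval_eq_zero hA hB hC)

lemma eval_mul_nonneg_of_mem_convexHull_triple {ℓ : Line2} (hB : ℓ.eval B = 0)
    (hC : ℓ.eval C = 0) (hz : z ∈ convexHull ℝ ({A, B, C} : Set (ℝ × ℝ))) :
    0 ≤ ℓ.eval z * ℓ.eval A := by
  refine ℓ.eval_mul_nonneg_of_mem_convexHull ?_ hz
  rintro w (rfl | rfl | rfl) <;> simp [hB, hC, mul_self_nonneg]

lemma isClosed_convexHull_triple (A B C : ℝ × ℝ) :
    IsClosed (convexHull ℝ ({A, B, C} : Set (ℝ × ℝ))) :=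
  ((toFinite _).isCompact_convexHull ℝ).isClosed

lemma segment_subset_frontier_convexHull (hnc : ¬Collinear ℝ ({A, B, C} : Set (ℝ × ℝ))) :
    segment ℝ A B ⊆ frontier (convexHull ℝ ({A, B, C} : Set (ℝ × ℝ))) := by
  have hAB := ne_of_not_collinear hnc
  have hnc' := not_collinear_rotate (not_collinear_rotate hnc)
  have hmA := Line2.eval_through_left hAB
  have hmB := Line2.eval_through_right hAB
  intro z hz
  rw [frontier, (isClosed_convexHull_triple A B C).closure_eq]
  refine ⟨segment_subset_convexHull (by simp) (by simp) hz, ?_⟩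
  rw [Set.insert_insert_singleton_rotate C A B]
  exact Line2.notMem_interior_of_eval_eq_zero (eval_ne_zero_of_not_collinear hnc' hmA hmB)
    (fun w hw => eval_mul_nonneg_of_mem_convexHull_triple hmA hmB hw)
    (Line2.eval_eq_zero_of_mem_segment hmA hmB hz)

lemma isEdge_convexHull_segment (hnc : ¬Collinear ℝ ({A, B, C} : Set (ℝ × ℝ))) :
    IsEdge (convexHull ℝ ({A, B, C} : Set (ℝ × ℝ))) (segment ℝ A B) := by
  have hnc₁ := not_collinear_rotate hnc
  have hnc₂ := not_collinear_rotate hnc₁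
  have hAB := ne_of_not_collinear hnc
  have hBC := ne_of_not_collinear hnc₁
  have hCA := ne_of_not_collinear hnc₂
  let m := Line2.through A B hAB
  let g := Line2.through B C hBC
  let h := Line2.through C A hCA
  have hmA : m.eval A = 0 := Line2.eval_through_left hAB
  have hmB : m.eval B = 0 := Line2.eval_through_right hAB
  have hgB : g.eval B = 0 := Line2.eval_through_left hBC
  have hgC : g.eval C = 0 := Line2.eval_through_right hBC
  have hhC : h.eval C = 0 := Line2.eval_through_left hCA
  have hhA : h.eval A = 0 := Line2.eval_through_right hCA
  refine ⟨A, B, hAB, rfl, segment_subset_frontier_convexHull hnc, fun x' y' hsub hfr => ?_⟩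
  have hx'y' := Line2.eval_eq_zero_of_mem_segment_of_mem_segment hAB
    (hsub (left_mem_segment ℝ A B)) (hsub (right_mem_segment ℝ A B)) hmA hmB
  have hmem : ∀ z ∈ segment ℝ x' y', m.eval z = 0 → z ∈ segment ℝ A B := by
    intro z hz hz0
    have hzT := (isClosed_convexHull_triple A B C).frontier_subset (hfr hz)
    have hzT' : z ∈ convexHull ℝ ({B, C, A} : Set (ℝ × ℝ)) := by
      rwa [Set.insert_insert_singleton_rotate]
    exact Line2.mem_segment_of_eval hAB hmA hmB hgB hhA
      (mul_self_pos.mpr (eval_ne_zero_of_not_collinear hnc hgB hgC))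
      (mul_self_pos.mpr (eval_ne_zero_of_not_collinear hnc₁ hhC hhA)) hz0
      (eval_mul_nonneg_of_mem_convexHull_triple hgB hgC hzT)
      (eval_mul_nonneg_of_mem_convexHull_triple hhC hhA hzT')
  exact subset_antisymm ((convex_segment A B).segment_subset
    (hmem _ (left_mem_segment ℝ x' y') hx'y'.1) (hmem _ (right_mem_segment ℝ x' y') hx'y'.2)) hsub

end Triangle

section Arrangement

variable {L : Finset Line2} {x y A B C : ℝ × ℝ} {m g h : Line2}

lemma exists_eval_eq_zero_of_forall_mem_segment
    (hcov : ∀ z ∈ segment ℝ A B, ∃ ℓ ∈ L, ℓ.eval z = 0) :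
    ∃ ℓ ∈ L, ℓ.eval A = 0 ∧ ℓ.eval B = 0 := by
  have hIcc : Icc (0 : ℝ) 1 ⊆ ⋃ ℓ ∈ L, {t | ℓ.eval (AffineMap.lineMap A B t) = 0} := by
    intro t ht
    obtain ⟨ℓ, hℓ, h0⟩ := hcov _ (segment_eq_image_lineMap ℝ A B ▸ mem_image_of_mem _ ht)
    exact mem_biUnion hℓ h0
  obtain ⟨ℓ, hℓ, hinf⟩ : ∃ ℓ ∈ L, {t : ℝ | ℓ.eval (AffineMap.lineMap A B t) = 0}.Infinite := by
    by_contra! hfin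
    exact Icc_infinite zero_lt_one ((L.finite_toSet.biUnion hfin).subset hIcc)
  obtain ⟨s, hs, t, ht, hst⟩ := hinf.nontrivial
  exact ⟨ℓ, hℓ, Line2.eval_eq_zero_of_eval_lineMap hst hs ht⟩

lemma exists_eval_eq_zero_of_segment_subset_frontier (hx : ∀ ℓ ∈ L, ℓ.eval x ≠ 0)
    (hAB : segment ℝ A B ⊆ frontier (closure (openCell L x))) :
    ∃ ℓ ∈ L, ℓ.eval A = 0 ∧ ℓ.eval B = 0 :=
  exists_eval_eq_zero_of_forall_mem_segment fun _ hz =>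
    exists_eval_eq_zero_of_mem_diff hx (frontier_closure_openCell hx ▸ hAB hz)

lemma eval_ne_zero_of_mem_closedCell (hg : g ∈ L) (hh : h ∈ L) (hAB : A ≠ B)
    (hmA : m.eval A = 0) (hmB : m.eval B = 0) (hgB : g.eval B = 0) (hhA : h.eval A = 0)
    (hgA : 0 < g.eval A * g.eval y) (hhB : 0 < h.eval B * h.eval y)
    (hgxy : g.Separates x y) (hhxy : h.Separates x y) {z : ℝ × ℝ} (hz : z ∈ closedCell L x) :
    m.eval z ≠ 0 :=
  Line2.eval_ne_zero_of_eval_mul_nonpos hAB hmA hmB hgB hhA hgA hhB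
    (mul_nonpos_of_mul_nonneg_of_mul_neg (hz g hg) hgxy)
    (mul_nonpos_of_mul_nonneg_of_mul_neg (hz h hh) hhxy)

lemma isEdge_closure_openCell_segment (hL : IsSimpleArrangement L)
    (hx : ∀ ℓ ∈ L, ℓ.eval x ≠ 0) (hy : ∀ ℓ ∈ L, ℓ.eval y ≠ 0)
    (hm : m ∈ L) (hg : g ∈ L) (hh : h ∈ L) (hAB : A ≠ B)
    (hmA : m.eval A = 0) (hmB : m.eval B = 0) (hgB : g.eval B = 0) (hhA : h.eval A = 0)
    (hgA : 0 < g.eval A * g.eval y) (hhB : 0 < h.eval B * h.eval y)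
    (hgxy : ¬g.Separates x y) (hhxy : ¬h.Separates x y)
    (hABy : segment ℝ A B ⊆ closedCell L y)
    (hedge : ∃ e, IsEdge (closure (openCell L x)) e ∧ e ⊆ m.carrier) :
    IsEdge (closure (openCell L x)) (segment ℝ A B) := by
  obtain ⟨e, ⟨a, b, hab, rfl, hefr, hemax⟩, hem⟩ := hedge
  rw [frontier_closure_openCell hx] at hefr hemax
  replace hgxy := g.mul_pos_of_not_separates (hx g hg) (hy g hg) hgxy
  replace hhxy := h.mul_pos_of_not_separates (hx h hh) (hy h hh) hhxy
  have hm0 : ∀ z ∈ segment ℝ a b, m.eval z = 0 :=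
    fun z hz => Line2.mem_carrier_iff_eval_eq_zero.mp (hem hz)
  have hab_sub : segment ℝ a b ⊆ segment ℝ A B := fun z hz =>
    Line2.mem_segment_of_eval hAB hmA hmB hgB hhA hgA hhB (hm0 z hz)
      (mul_nonneg_of_mul_nonneg_of_mul_pos ((hefr hz).1 g hg) hgxy)
      (mul_nonneg_of_mul_nonneg_of_mul_pos ((hefr hz).1 h hh) hhxy)
  have hsame : ∀ ℓ ∈ L, ℓ ≠ m → 0 < ℓ.eval x * ℓ.eval y := by
    intro ℓ hℓ hne
    refine (mul_ne_zero (hx ℓ hℓ) (hy ℓ hℓ)).lt_or_gt.resolve_left fun hsep => ?_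
    have hℓ0 : ∀ z ∈ segment ℝ a b, ℓ.eval z = 0 := fun z hz =>
      eq_zero_of_mul_nonneg_of_mul_nonneg ((hefr hz).1 ℓ hℓ) (hABy (hab_sub hz) ℓ hℓ) hsep
    exact hL.1 ℓ hℓ m hm hne (Line2.parallel_of_eval_eq_zero hab
      (hℓ0 a (left_mem_segment ℝ a b)) (hℓ0 b (right_mem_segment ℝ a b))
      (hm0 a (left_mem_segment ℝ a b)) (hm0 b (right_mem_segment ℝ a b)))
  have hAB_fr : segment ℝ A B ⊆ closedCell L x \ openCell L x := by
    intro z hz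
    have hmz := Line2.eval_eq_zero_of_mem_segment hmA hmB hz
    refine ⟨fun ℓ hℓ => ?_, fun hzx => by simpa [hmz] using hzx m hm⟩
    by_cases hℓm : ℓ = m
    · simp [hℓm, hmz]
    · exact mul_nonneg_of_mul_nonneg_of_mul_pos (hABy hz ℓ hℓ) (by linarith [hsame ℓ hℓ hℓm])
  rw [IsEdge, frontier_closure_openCell hx]
  refine ⟨A, B, hAB, rfl, hAB_fr, fun x' y' hsub hfr => ?_⟩
  rw [hemax x' y' (hab_sub.trans hsub) hfr, hemax A B hab_sub hAB_fr]

lemma not_separates_and_exists_common_edge (hL : IsSimpleArrangement L)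
    (hx : ∀ ℓ ∈ L, ℓ.eval x ≠ 0) (hy : ∀ ℓ ∈ L, ℓ.eval y ≠ 0)
    (hall : ∀ ℓ ∈ L, ∃ e, IsEdge (closure (openCell L x)) e ∧ e ⊆ ℓ.carrier)
    (hT : closure (openCell L y) = convexHull ℝ ({A, B, C} : Set (ℝ × ℝ)))
    (hnc : ¬Collinear ℝ ({A, B, C} : Set (ℝ × ℝ)))
    (hm : m ∈ L) (hmA : m.eval A = 0) (hmB : m.eval B = 0)
    (hg : g ∈ L) (hgB : g.eval B = 0) (hgC : g.eval C = 0)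
    (hh : h ∈ L) (hhC : h.eval C = 0) (hhA : h.eval A = 0) :
    ¬(g.Separates x y ∧ h.Separates x y) ∧
      (¬g.Separates x y → ¬h.Separates x y →
        ∃ e, IsEdge (closure (openCell L y)) e ∧ IsEdge (closure (openCell L x)) e) := by
  have hTy : closedCell L y = convexHull ℝ ({A, B, C} : Set (ℝ × ℝ)) := closure_openCell hy ▸ hT
  have hAB := ne_of_not_collinear hnc
  have hvertex : ∀ {ℓ : Line2} {V : ℝ × ℝ}, ℓ ∈ L → V ∈ ({A, B, C} : Set (ℝ × ℝ)) →
      ℓ.eval V ≠ 0 → 0 < ℓ.eval V * ℓ.eval y := fun hℓ hV hne =>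
    ((hTy ▸ subset_convexHull ℝ _ hV : _ ∈ closedCell L y) _ hℓ).lt_of_ne
      (mul_ne_zero hne (hy _ hℓ)).symm
  have hgA := hvertex hg (by simp) (eval_ne_zero_of_not_collinear hnc hgB hgC)
  have hhB := hvertex hh (by simp)
    (eval_ne_zero_of_not_collinear (not_collinear_rotate hnc) hhC hhA)
  obtain ⟨e, he, hem⟩ := hall m hm
  refine ⟨fun ⟨hgs, hhs⟩ => ?_, fun hgs hhs => ?_⟩
  · obtain ⟨a, b, -, rfl, hefr, -⟩ := he
    have ha := hefr (left_mem_segment ℝ a b)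
    rw [frontier_closure_openCell hx] at ha
    exact eval_ne_zero_of_mem_closedCell hg hh hAB hmA hmB hgB hhA hgA hhB hgs hhs ha.1
      (Line2.mem_carrier_iff_eval_eq_zero.mp (hem (left_mem_segment ℝ a b)))
  · exact ⟨segment ℝ A B, hT ▸ isEdge_convexHull_segment hnc,
      isEdge_closure_openCell_segment hL hx hy hm hg hh hAB hmA hmB hgB hhA hgA hhB hgs hhs
        (hTy ▸ segment_subset_convexHull (by simp) (by simp)) ⟨e, he, hem⟩⟩

end Arrangement

theorem stmt18_general (L : Finset Line2) (hL : IsSimpleArrangement L)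
    (P T : Set (ℝ × ℝ))
    (hP : IsCell L P)
    (hall : ∀ ℓ ∈ L, ∃ e : Set (ℝ × ℝ), IsEdge (closure P) e ∧ e ⊆ ℓ.carrier)
    (hT : IsCell L T)
    (hTtri : IsTriangleSet (closure T)) :
    ∃ e : Set (ℝ × ℝ), IsEdge (closure T) e ∧ IsEdge (closure P) e := by
  obtain ⟨x, hx, rfl⟩ := hP.exists_eq_openCell
  obtain ⟨y, hy, rfl⟩ := hT.exists_eq_openCell
  obtain ⟨u, v, w, hnc, huvw⟩ := hTtri
  have hnc₁ := not_collinear_rotate hnc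
  have hnc₂ := not_collinear_rotate hnc₁
  have hvwu : closure (openCell L y) = convexHull ℝ {v, w, u} := by
    rw [huvw, ← Set.insert_insert_singleton_rotate u v w]
  have hwuv : closure (openCell L y) = convexHull ℝ {w, u, v} := by
    rw [hvwu, ← Set.insert_insert_singleton_rotate v w u]
  have hside : ∀ {A B C : ℝ × ℝ}, closure (openCell L y) = convexHull ℝ {A, B, C} →
      ¬Collinear ℝ ({A, B, C} : Set (ℝ × ℝ)) → ∃ ℓ ∈ L, ℓ.eval A = 0 ∧ ℓ.eval B = 0 :=
    fun hABC hnc => exists_eval_eq_zero_of_segment_subset_frontier hy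
      (hABC ▸ segment_subset_frontier_convexHull hnc)
  obtain ⟨r, hr, hru, hrv⟩ := hside huvw hnc
  obtain ⟨p, hp, hpv, hpw⟩ := hside hvwu hnc₁
  obtain ⟨q, hq, hqw, hqu⟩ := hside hwuv hnc₂
  have hpq := not_separates_and_exists_common_edge hL hx hy hall huvw hnc
    hr hru hrv hp hpv hpw hq hqw hqu
  have hqr := not_separates_and_exists_common_edge hL hx hy hall hvwu hnc₁
    hp hpv hpw hq hqw hqu hr hru hrv
  have hrp := not_separates_and_exists_common_edge hL hx hy hall hwuv hnc₂
    hq hqw hqu hr hru hrv hp hpv hpw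
  tauto

/-- Let `L` be a simple arrangement of lines, `P` a bounded convex cell of `L`
with at least 5 edges such that every line of `L` contains an edge of `P`, and
let `T` be any triangular bounded cell of `L`.  Then `T` and `P` share a common
edge. -/
theorem stmt18 (L : Finset Line2) (hL : IsSimpleArrangement L)
    (P T : Set (ℝ × ℝ))
    (hP : IsCell L P) (hPconv : Convex ℝ P) (hPb : Bornology.IsBounded P)
    (hP5 : 5 ≤ {e : Set (ℝ × ℝ) | IsEdge (closure P) e}.ncard)
    (hall : ∀ ℓ ∈ L, ∃ e : Set (ℝ × ℝ), IsEdge (closure P) e ∧ e ⊆ ℓ.carrier)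
    (hT : IsCell L T) (hTb : Bornology.IsBounded T)
    (hTtri : IsTriangleSet (closure T)) :
    ∃ e : Set (ℝ × ℝ), IsEdge (closure T) e ∧ IsEdge (closure P) e :=
  stmt18_general L hL P T hP hall hT hTtri
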